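/- arXiv:2410.08343 — 2 statements merged into one kernel-verified Lean document; each statement's English description precedes it below -/
import Mathlib

section
/- Let K(x) = (1/(2πi)) ∑_{j=1}^m (α_j/(x−a_j) − conj(α_j)/(x−conj(a_j))) with distinct poles a_j in the open upper half-plane and residues α_j solving the Vandermonde conditions ∑α_j = 1 and ∑α_j a_j^{ℓ} = 0 for 1 ≤ ℓ ≤ m−1. Then K is real-valued and there is a constant C such that |K(x)| ≤ C·(1+|x|)^{−(m+1)} for all real x. -/
/-!
Since `x` is real, the second Cauchy kernel of each pair is the conjugate of the first, so
`K x = π⁻¹ · Im F(x)` with `F(x) = ∑ αⱼ / (x - aⱼ)`; in particular `K` is real.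
Expanding `xᵐ / (x - a)` as a geometric sum gives
`xᵐ F(x) = ∑_{i<m} μ_{m-1-i} xⁱ + ∑ αⱼ aⱼᵐ / (x - aⱼ)`
with moments `μ_ℓ = ∑ αⱼ aⱼ^ℓ`.
The Vandermonde conditions make these moments real, so the polynomial part has no imaginary
part and `|x|ᵐ |Im F(x)| = O(1 / (1 + |x|))`. Together with `|F(x)| = O(1 / (1 + |x|))`,
which holds because no pole is real, this gives the decay.
-/

open Real Finset ComplexConjugate

theorem pow_div_sub_eq_geom_sum_add {F : Type*} [Field F] {x b : F} (h : x - b ≠ 0) (m : ℕ) :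
    x ^ m / (x - b) = ∑ i ∈ range m, x ^ i * b ^ (m - 1 - i) + b ^ m / (x - b) := by
  have hgeom := geom_sum₂_mul x b m
  field_simp
  linear_combination -hgeom

theorem pow_mul_sum_div_sub_eq {F ι : Type*} [Field F] (s : Finset ι) (α a : ι → F)
    {x : F} (hx : ∀ k ∈ s, x - a k ≠ 0) (m : ℕ) :
    x ^ m * ∑ k ∈ s, α k / (x - a k) =
      ∑ i ∈ range m, (∑ k ∈ s, α k * a k ^ (m - 1 - i)) * x ^ i +
        ∑ k ∈ s, α k * a k ^ m / (x - a k) := by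
  have hterm : ∀ k ∈ s, x ^ m * (α k / (x - a k)) =
      ∑ i ∈ range m, α k * a k ^ (m - 1 - i) * x ^ i + α k * a k ^ m / (x - a k) := by
    intro k hk
    rw [mul_div_left_comm, pow_div_sub_eq_geom_sum_add (hx k hk), mul_add, mul_sum]
    congr 1
    · exact sum_congr rfl fun i _ => by ring
    · ring
  rw [mul_sum, sum_congr rfl hterm, sum_add_distrib, sum_comm]
  simp only [sum_mul]

theorem pow_mul_im_sum_div_sub_eq {ι : Type*} (s : Finset ι) (α a : ι → ℂ) {x : ℝ}
    (hx : ∀ k ∈ s, (x : ℂ) - a k ≠ 0) {m : ℕ}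
    (hμ : ∀ j < m, (∑ k ∈ s, α k * a k ^ j).im = 0) :
    x ^ m * (∑ k ∈ s, α k / ((x : ℂ) - a k)).im =
      (∑ k ∈ s, α k * a k ^ m / ((x : ℂ) - a k)).im := by
  have hexp := congrArg Complex.im (pow_mul_sum_div_sub_eq s α a hx m)
  rw [← Complex.ofReal_pow, Complex.im_ofReal_mul, Complex.add_im] at hexp
  rw [hexp, add_eq_right, Complex.im_sum]
  refine sum_eq_zero fun i hi => ?_
  rw [← Complex.ofReal_pow, Complex.mul_im, Complex.ofReal_im, Complex.ofReal_re,
    hμ _ (by have := mem_range.mp hi; omega)]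
  ring

theorem exists_mul_one_add_abs_le_norm_ofReal_sub {a : ℂ} (ha : a.im ≠ 0) :
    ∃ c > 0, ∀ x : ℝ, c * (1 + |x|) ≤ ‖(x : ℂ) - a‖ := by
  have him : ∀ x : ℝ, |a.im| ≤ ‖(x : ℂ) - a‖ := fun x => by
    simpa using Complex.abs_im_le_norm ((x : ℂ) - a)
  have hre : ∀ x : ℝ, |x| - ‖a‖ ≤ ‖(x : ℂ) - a‖ := fun x => by
    simpa using norm_sub_norm_le (x : ℂ) a
  have hpos : 0 < |a.im| := abs_pos.mpr ha
  -- combine the two lower bounds with weights `1 + ‖a‖` and `|Im a|`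
  refine ⟨|a.im| / (1 + |a.im| + ‖a‖), div_pos hpos (by positivity), fun x => ?_⟩
  rw [div_mul_eq_mul_div, div_le_iff₀ (by positivity)]
  nlinarith [him x, hre x, norm_nonneg a]

theorem exists_norm_sum_div_ofReal_sub_le {ι : Type*} [Fintype ι] {a : ι → ℂ}
    (ha : ∀ k, (a k).im ≠ 0) (β : ι → ℂ) :
    ∃ B, ∀ x : ℝ, ‖∑ k, β k / ((x : ℂ) - a k)‖ ≤ B / (1 + |x|) := by
  choose c hc_pos hc using fun k => exists_mul_one_add_abs_le_norm_ofReal_sub (ha k)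
  refine ⟨∑ k, ‖β k‖ / c k, fun x => ?_⟩
  calc ‖∑ k, β k / ((x : ℂ) - a k)‖
      ≤ ∑ k, ‖β k‖ / ‖(x : ℂ) - a k‖ := by
        simpa only [norm_div] using norm_sum_le univ fun k => β k / ((x : ℂ) - a k)
    _ ≤ ∑ k, ‖β k‖ / (c k * (1 + |x|)) := by
        gcongr with k
        · exact mul_pos (hc_pos k) (by positivity)
        · exact hc k x
    _ = (∑ k, ‖β k‖ / c k) / (1 + |x|) := by
        rw [sum_div]
        exact sum_congr rfl fun k _ => by rw [div_div]

theorem one_div_two_pi_I_mul_sum_sub_conj {ι : Type*} (s : Finset ι) (α a : ι → ℂ)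
    (x : ℝ) :
    1 / (2 * (π : ℂ) * Complex.I) *
        ∑ k ∈ s, (α k / ((x : ℂ) - a k) - conj (α k) / ((x : ℂ) - conj (a k))) =
      ((∑ k ∈ s, α k / ((x : ℂ) - a k)).im / π : ℝ) := by
  have hconj : ∀ k ∈ s,
      conj (α k) / ((x : ℂ) - conj (a k)) = conj (α k / ((x : ℂ) - a k)) := fun k _ => by
    rw [map_div₀, map_sub, Complex.conj_ofReal]
  rw [sum_congr rfl fun k hk => by rw [hconj k hk], sum_sub_distrib, ← map_sum,
    Complex.sub_conj]
  push_cast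
  field_simp [Complex.I_ne_zero, Real.pi_ne_zero]

theorem le_div_one_add_pow_succ_of_le {t y B₀ B₁ : ℝ} (m : ℕ) (ht : 0 ≤ t) (hy : 0 ≤ y)
    (h₀ : y ≤ B₀ / (1 + t)) (h₁ : t ^ m * y ≤ B₁ / (1 + t)) :
    y ≤ 2 ^ (m - 1) * (B₀ + B₁) / (1 + t) ^ (m + 1) := by
  have ht₁ : 0 < 1 + t := by linarith
  rw [le_div_iff₀ ht₁] at h₀ h₁
  rw [le_div_iff₀ (by positivity)]
  calc y * (1 + t) ^ (m + 1) = (1 + t) ^ m * (y * (1 + t)) := by ring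
    _ ≤ 2 ^ (m - 1) * (1 ^ m + t ^ m) * (y * (1 + t)) := by
        gcongr
        exact add_pow_le zero_le_one ht m
    _ = 2 ^ (m - 1) * (y * (1 + t) + t ^ m * y * (1 + t)) := by ring
    _ ≤ 2 ^ (m - 1) * (B₀ + B₁) := by gcongr

theorem rational_kernel_real_valued_and_decay_general (m : ℕ)
    (a α : Fin m → ℂ) (haim : ∀ k, 0 < (a k).im)
    (hnorm : ∑ k : Fin m, α k = 1)
    (hmom : ∀ ℓ : ℕ, 1 ≤ ℓ → ℓ ≤ m - 1 → ∑ k : Fin m, α k * a k ^ ℓ = 0)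
    (K : ℝ → ℂ)
    (hK : ∀ x : ℝ, K x = (1 / (2 * (π : ℂ) * Complex.I)) *
        ∑ k : Fin m, (α k / ((x : ℂ) - a k) -
          (starRingEnd ℂ) (α k) / ((x : ℂ) - (starRingEnd ℂ) (a k)))) :
    (∀ x : ℝ, (K x).im = 0) ∧
    ∃ C : ℝ, ∀ x : ℝ, ‖K x‖ ≤ C / (1 + |x|) ^ (m + 1) := by
  have hK_im : ∀ x : ℝ, K x = ((∑ k, α k / ((x : ℂ) - a k)).im / π : ℝ) := fun x => by
    rw [hK x, one_div_two_pi_I_mul_sum_sub_conj]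
  refine ⟨fun x => by rw [hK_im x, Complex.ofReal_im], ?_⟩
  have ha : ∀ k, (a k).im ≠ 0 := fun k => (haim k).ne'
  have hμ : ∀ j < m, (∑ k, α k * a k ^ j).im = 0 := fun j hj => by
    rcases Nat.eq_zero_or_pos j with rfl | hj₀
    · simp [hnorm]
    · simp [hmom j hj₀ (by omega)]
  obtain ⟨B₀, hB₀⟩ := exists_norm_sum_div_ofReal_sub_le ha α
  obtain ⟨B₁, hB₁⟩ := exists_norm_sum_div_ofReal_sub_le ha fun k => α k * a k ^ m
  refine ⟨2 ^ (m - 1) * (B₀ + B₁) / π, fun x => ?_⟩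
  have hx : ∀ k ∈ univ, (x : ℂ) - a k ≠ 0 := fun k _ h =>
    ha k (by simpa using congrArg Complex.im h)
  set y := |(∑ k, α k / ((x : ℂ) - a k)).im|
  have h₀ : y ≤ B₀ / (1 + |x|) := (Complex.abs_im_le_norm _).trans (hB₀ x)
  have h₁ : |x| ^ m * y ≤ B₁ / (1 + |x|) := by
    rw [← abs_pow, ← abs_mul, pow_mul_im_sum_div_sub_eq univ α a hx hμ]
    exact (Complex.abs_im_le_norm _).trans (hB₁ x)
  rw [hK_im x, Complex.norm_real, norm_div, Real.norm_of_nonneg pi_pos.le, div_right_comm]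
  gcongr
  exact le_div_one_add_pow_succ_of_le m (abs_nonneg x) (abs_nonneg _) h₀ h₁

/-- An `m`-th order rational kernel `K(x) = (1/(2πi)) ∑ⱼ (αⱼ/(x−aⱼ) − conj(αⱼ)/(x−conj(aⱼ)))`
with distinct poles in the open upper half-plane and residues satisfying the Vandermonde
conditions is real-valued and decays like `(1+|x|)^{-(m+1)}`. -/
theorem rational_kernel_real_valued_and_decay (m : ℕ) (hm : 0 < m)
    (a α : Fin m → ℂ) (ha : Function.Injective a) (haim : ∀ k, 0 < (a k).im)
    (hnorm : ∑ k : Fin m, α k = 1)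
    (hmom : ∀ ℓ : ℕ, 1 ≤ ℓ → ℓ ≤ m - 1 → ∑ k : Fin m, α k * a k ^ ℓ = 0)
    (K : ℝ → ℂ)
    (hK : ∀ x : ℝ, K x = (1 / (2 * (π : ℂ) * Complex.I)) *
        ∑ k : Fin m, (α k / ((x : ℂ) - a k) -
          (starRingEnd ℂ) (α k) / ((x : ℂ) - (starRingEnd ℂ) (a k)))) :
    (∀ x : ℝ, (K x).im = 0) ∧
    ∃ C : ℝ, ∀ x : ℝ, ‖K x‖ ≤ C / (1 + |x|) ^ (m + 1) :=
  rational_kernel_real_valued_and_decay_general m a α haim hnorm hmom K hK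
end

section
/- Let μ be a finite complex Borel measure on ℝ, K an mth order kernel with |K(x)| ≤ C_K·(1+|x|)^{−(m+1)}, and suppose μ restricted to [λ−δ, λ+δ] vanishes. Then |(K_ε * μ)(λ)| ≤ C_K · ε^m · ‖μ‖ / (δ^{m+1} + ε^{m+1}) for all ε > 0, where ‖μ‖ is the total variation norm of μ; in particular (K_ε * μ)(λ) = O(ε^m) as ε → 0⁺. -/
open MeasureTheory Real

/-- Quantitative far-field bound: if the finite complex measure `μ = g·ν` vanishes on
`[λ−δ, λ+δ]` and `K` is an `m`-th order kernel with decay constant `C_K`, then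
`|(K_ε * μ)(λ)| ≤ C_K ε^m ‖μ‖ / (δ^{m+1} + ε^{m+1})`. -/
theorem smoothed_measure_far_from_support_bound
    (ν : Measure ℝ) [IsFiniteMeasure ν] (g : ℝ → ℂ) (hg : Integrable g ν)
    (m : ℕ) (hm : 1 ≤ m) (K : ℝ → ℂ) (hKm : Measurable K) (hKint : Integrable K)
    (CK : ℝ) (hKdecay : ∀ x : ℝ, ‖K x‖ ≤ CK / (1 + |x|) ^ (m + 1))
    (lam δ : ℝ) (hδ : 0 < δ)
    (hvanish : ∀ᵐ t ∂ν, t ∈ Set.Icc (lam - δ) (lam + δ) → g t = 0)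
    (ε : ℝ) (hε : 0 < ε) :
    ‖∫ t, (1 / ε : ℂ) * K ((lam - t) / ε) * g t ∂ν‖ ≤
      CK * ε ^ m * (∫ t, ‖g t‖ ∂ν) / (δ ^ (m + 1) + ε ^ (m + 1)) := by
  have hCK : 0 ≤ CK := by
    have := (norm_nonneg (K 0)).trans (hKdecay 0)
    simpa using this
  have hD : 0 < δ ^ (m + 1) + ε ^ (m + 1) := by positivity
  set c : ℝ := CK * ε ^ m / (δ ^ (m + 1) + ε ^ (m + 1)) with hc
  have hcnn : 0 ≤ c := by positivity
  have hbound : ∀ᵐ t ∂ν, ‖(1 / ε : ℂ) * K ((lam - t) / ε) * g t‖ ≤ c * ‖g t‖ := by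
    filter_upwards [hvanish] with t ht
    by_cases hgt : g t = 0
    · simp [hgt]
    · have htI : t ∉ Set.Icc (lam - δ) (lam + δ) := fun h => hgt (ht h)
      have hx : δ ≤ |lam - t| := by
        have hcases : t < lam - δ ∨ lam + δ < t := by
          by_contra h
          push_neg at h
          exact htI (Set.mem_Icc.mpr ⟨h.1, h.2⟩)
        rcases hcases with h | h
        · rw [abs_of_nonneg (by linarith)]; linarith
        · rw [abs_of_nonpos (by linarith)]; linarith
      set x := |lam - t| with hxdef
      have hx0 : 0 < x := lt_of_lt_of_le hδ hx
      have habs : |(lam - t) / ε| = x / ε := by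
        rw [abs_div, abs_of_pos hε]
      have hK1 : ‖K ((lam - t) / ε)‖ ≤ CK / (1 + x / ε) ^ (m + 1) := by
        simpa [habs] using hKdecay ((lam - t) / ε)
      have hkey : (1 / ε) * (CK / (1 + x / ε) ^ (m + 1)) = CK * ε ^ m / (ε + x) ^ (m + 1) := by
        have h1 : 1 + x / ε = (ε + x) / ε := by field_simp
        rw [h1, div_pow]
        have hne : (ε + x) ^ (m + 1) ≠ 0 := by positivity
        field_simp
        ring
      have hden : δ ^ (m + 1) + ε ^ (m + 1) ≤ (ε + x) ^ (m + 1) := by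
        calc δ ^ (m + 1) + ε ^ (m + 1) ≤ x ^ (m + 1) + ε ^ (m + 1) := by
              gcongr
            _ = ε ^ (m + 1) + x ^ (m + 1) := by ring
            _ ≤ (ε + x) ^ (m + 1) :=
              pow_add_pow_le hε.le hx0.le (Nat.succ_ne_zero m)
      have h2 : CK * ε ^ m / (ε + x) ^ (m + 1) ≤ c := by
        rw [hc]
        exact div_le_div_of_nonneg_left (by positivity) hD hden
      calc ‖(1 / ε : ℂ) * K ((lam - t) / ε) * g t‖
          = (1 / ε) * ‖K ((lam - t) / ε)‖ * ‖g t‖ := by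
            simp [norm_mul, abs_of_pos hε]
        _ ≤ (1 / ε) * (CK / (1 + x / ε) ^ (m + 1)) * ‖g t‖ := by
            gcongr
        _ = CK * ε ^ m / (ε + x) ^ (m + 1) * ‖g t‖ := by rw [hkey]
        _ ≤ c * ‖g t‖ := by gcongr
  calc ‖∫ t, (1 / ε : ℂ) * K ((lam - t) / ε) * g t ∂ν‖
      ≤ ∫ t, c * ‖g t‖ ∂ν :=
        norm_integral_le_of_norm_le (hg.norm.const_mul c) hbound
    _ = c * ∫ t, ‖g t‖ ∂ν := integral_const_mul c _
    _ = CK * ε ^ m * (∫ t, ‖g t‖ ∂ν) / (δ ^ (m + 1) + ε ^ (m + 1)) := by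
        rw [hc, div_mul_eq_mul_div]
end
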